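/- Let G be a simple graph of Class 2 with a critical edge e1 = y0 y1, let φ ∈ C^Δ(G − e1), and let K = (y0, e1, y1, e2, y2, e3, y3) be a Kierstead path with respect to e1 and φ. Then |φ̄(y3) ∩ (φ̄(y0) ∪ φ̄(y1))| ≤ 1. -/

import Mathlib

/-- A proper `k`-edge-coloring of `G` with colors from `{1, …, k}`: every edge of `G`
receives a color in `{1, …, k}` and distinct edges sharing a vertex get distinct colors. -/
def IsProperEdgeColoring {V : Type*} (G : SimpleGraph V) (k : ℕ) (φ : Sym2 V → ℕ) : Prop :=
  (∀ e ∈ G.edgeSet, φ e ∈ Finset.Icc 1 k) ∧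
    ∀ e₁ ∈ G.edgeSet, ∀ e₂ ∈ G.edgeSet, e₁ ≠ e₂ → (∃ v, v ∈ e₁ ∧ v ∈ e₂) → φ e₁ ≠ φ e₂

/-- The chromatic index `χ'(G)`: the least `k` such that `G` has a proper `k`-edge-coloring. -/
noncomputable def chromIndex {V : Type*} (G : SimpleGraph V) : ℕ :=
  sInf {k | ∃ φ : Sym2 V → ℕ, IsProperEdgeColoring G k φ}

/-- The set `φ̄(u)` of colors of `{1, …, k}` missing at `u`, i.e. not used by `φ` on
any edge of `G` incident with `u`. -/
def missing {V : Type*} (G : SimpleGraph V) (k : ℕ) (φ : Sym2 V → ℕ) (u : V) : Set ℕ :=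
  {c | c ∈ Finset.Icc 1 k ∧ ∀ v, G.Adj u v → φ s(u, v) ≠ c}

/-!
Write `φ̄` for missing sets in `G - y0y1`. As `G` is Class 2, no `Δ`-colouring of `G - y0y1`
has a colour missing at both `y0` and `y1`. Hence for `c ∈ φ̄(y0)` and `d ∈ φ̄(y1)` the
`(c, d)`-Kempe chain at `y0` is a path ending at `y1`, so it avoids every third vertex at which
`c` or `d` is missing. In particular, when `c` or `d` is missing at `y3`, interchanging `c` and
`d` on the chain through `y3` keeps `φ̄(y0)`, `φ̄(y1)`, the colour of `y1y2` and the Kierstead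
conditions. Starting from two colours in `φ̄(y3) ∩ (φ̄(y0) ∪ φ̄(y1))`, at most four such swaps
produce a colouring in which `φ(y1y2)` is missing at `y3` and `φ(y2y3)` at `y1`; then the
`(φ(y1y2), φ(y2y3))`-chain from `y0` runs through `y1` and `y2` to `y3`, a contradiction.
-/

namespace SimpleGraph

variable {V : Type*} {H : SimpleGraph V}

lemma Reachable.mem_of_forall_adj_mem {S : Set V} (hS : ∀ v ∈ S, ∀ w, H.Adj v w → w ∈ S)
    {u v : V} (huv : H.Reachable u v) (hu : u ∈ S) : v ∈ S := by
  obtain ⟨q⟩ := huv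
  induction q with
  | nil => exact hu
  | cons hadj _ ih => exact ih (hS _ hu _ hadj)

namespace Walk

variable {y z : V} {p : H.Walk y z}

lemma IsPath.encard_neighborSet_toSubgraph_of_ne (hp : p.IsPath) {v : V} (hv : v ∈ p.support)
    (hvy : v ≠ y) (hvz : v ≠ z) : (p.toSubgraph.neighborSet v).encard = 2 := by
  obtain ⟨i, rfl, hi⟩ := mem_support_iff_exists_getVert.1 hv
  have hi0 : i ≠ 0 := by rintro rfl; exact hvy p.getVert_zero
  have hil : i < p.length := lt_of_le_of_ne hi (by rintro rfl; exact hvz p.getVert_length)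
  rw [← (p.finite_neighborSet_toSubgraph).cast_ncard_eq,
    hp.ncard_neighborSet_toSubgraph_internal_eq_two hi0 hil]
  rfl

lemma IsPath.neighborSet_subset_support (hp : p.IsPath) (hnil : ¬ p.Nil)
    (hdeg : ∀ v, (H.neighborSet v).encard ≤ 2) (hy : (H.neighborSet y).encard ≤ 1)
    (hz : (H.neighborSet z).encard ≤ 1) {v : V} (hv : v ∈ p.support) :
    H.neighborSet v ⊆ {w | w ∈ p.support} := by
  have hle : (H.neighborSet v).encard ≤ (p.toSubgraph.neighborSet v).encard := by
    by_cases hvy : v = y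
    · subst hvy; simpa [hp.neighborSet_toSubgraph_startpoint hnil] using hy
    by_cases hvz : v = z
    · subst hvz; simpa [hp.neighborSet_toSubgraph_endpoint hnil] using hz
    rw [hp.encard_neighborSet_toSubgraph_of_ne hv hvy hvz]
    exact hdeg v
  rw [← p.finite_neighborSet_toSubgraph.eq_of_subset_of_encard_le
    (p.toSubgraph.neighborSet_subset v) hle]
  exact fun w hw => p.mem_verts_toSubgraph.1 (p.toSubgraph.edge_vert hw.symm)

end Walk

/-- A path between two of the vertices is closed under adjacency, so it contains the third one as
an interior vertex, which has two neighbours on the path. -/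
lemma not_reachable_of_encard_neighborSet_le_one (hdeg : ∀ v, (H.neighborSet v).encard ≤ 2)
    {x y z : V} (hx : (H.neighborSet x).encard ≤ 1) (hy : (H.neighborSet y).encard ≤ 1)
    (hz : (H.neighborSet z).encard ≤ 1) (hxy : x ≠ y) (hxz : x ≠ z) (hyz : y ≠ z)
    (hryz : H.Reachable y z) : ¬ H.Reachable y x := by
  intro hryx
  classical
  obtain ⟨q⟩ := hryz
  set p := q.bypass
  have hp : p.IsPath := q.bypass_isPath
  have hx_mem : x ∈ p.support :=
    hryx.mem_of_forall_adj_mem (S := {w | w ∈ p.support})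
      (fun v hv => hp.neighborSet_subset_support (Walk.not_nil_of_ne hyz) hdeg hy hz hv)
      p.start_mem_support
  have h2 : (2 : ℕ∞) ≤ 1 := calc
    2 = (p.toSubgraph.neighborSet x).encard :=
        (hp.encard_neighborSet_toSubgraph_of_ne hx_mem hxy hxz).symm
    _ ≤ (H.neighborSet x).encard := Set.encard_le_encard (p.toSubgraph.neighborSet_subset x)
    _ ≤ 1 := hx
  exact absurd h2 (by decide)

end SimpleGraph

section ProperColoring

variable {V : Type*} {G : SimpleGraph V} {k : ℕ} {ψ : Sym2 V → ℕ}

lemma isProperEdgeColoring_iff :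
    IsProperEdgeColoring G k ψ ↔ (∀ v w, G.Adj v w → ψ s(v, w) ∈ Finset.Icc 1 k) ∧
      ∀ v w w', G.Adj v w → G.Adj v w' → w ≠ w' → ψ s(v, w) ≠ ψ s(v, w') := by
  constructor
  · rintro ⟨hrange, hne⟩
    refine ⟨fun v w h => hrange _ h, fun v w w' h h' hww' => hne _ h _ h'
      (fun h => hww' (Sym2.congr_right.1 h)) ⟨v, by simp, by simp⟩⟩
  · rintro ⟨hrange, hne⟩
    refine ⟨Sym2.ind fun v w h => hrange v w h, ?_⟩
    rintro e₁ he₁ e₂ he₂ hne₁₂ ⟨v, hv₁, hv₂⟩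
    obtain ⟨w, rfl⟩ := Sym2.mem_iff_exists.1 hv₁
    obtain ⟨w', rfl⟩ := Sym2.mem_iff_exists.1 hv₂
    exact hne v w w' he₁ he₂ (by rintro rfl; exact hne₁₂ rfl)

lemma IsProperEdgeColoring.ne_of_adj (hψ : IsProperEdgeColoring G k ψ) {v w w' : V}
    (h : G.Adj v w) (h' : G.Adj v w') (hww' : w ≠ w') : ψ s(v, w) ≠ ψ s(v, w') :=
  (isProperEdgeColoring_iff.1 hψ).2 v w w' h h' hww'

lemma mem_missing_iff {v : V} {c : ℕ} :
    c ∈ missing G k ψ v ↔ c ∈ Finset.Icc 1 k ∧ ∀ w, G.Adj v w → ψ s(v, w) ≠ c := Iff.rfl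

lemma missing_nonempty_of_card_lt {v : V} (s : Finset V) (hs : ∀ w, G.Adj v w → w ∈ s)
    (hk : s.card < k) :
    (missing G k ψ v).Nonempty := by
  classical
  have : ¬ Finset.Icc 1 k ⊆ s.image (fun w => ψ s(v, w)) := fun h => by
    have := (Finset.card_le_card h).trans Finset.card_image_le
    rw [Nat.card_Icc] at this
    omega
  obtain ⟨c, hc, hcs⟩ := Finset.not_subset.1 this
  exact ⟨c, hc, fun w hw hwc => hcs (Finset.mem_image.2 ⟨w, hs w hw, hwc⟩)⟩


lemma IsProperEdgeColoring.update_of_mem_missing [DecidableEq V] {u v : V} {c : ℕ}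
    (hψ : IsProperEdgeColoring (G.deleteEdges {s(u, v)}) k ψ)
    (hu : c ∈ missing (G.deleteEdges {s(u, v)}) k ψ u)
    (hv : c ∈ missing (G.deleteEdges {s(u, v)}) k ψ v) :
    IsProperEdgeColoring G k (Function.update ψ s(u, v) c) := by
  obtain ⟨hrange, hne⟩ := isProperEdgeColoring_iff.1 hψ
  have hdel {x y : V} (h : G.Adj x y) (hxy : s(x, y) ≠ s(u, v)) :
      (G.deleteEdges {s(u, v)}).Adj x y := SimpleGraph.deleteEdges_adj.2 ⟨h, hxy⟩
  have hfree {x y y' : V} (hxy : s(x, y) = s(u, v)) (h' : G.Adj x y') (hyy' : y ≠ y') :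
      ψ s(x, y') ≠ c := by
    have hxy' : s(x, y') ≠ s(u, v) := fun h => hyy' (Sym2.congr_right.1 (hxy.trans h.symm))
    rcases Sym2.mem_iff.1 (hxy ▸ Sym2.mem_mk_left x y : x ∈ s(u, v)) with rfl | rfl
    · exact hu.2 y' (hdel h' hxy')
    · exact hv.2 y' (hdel h' hxy')
  refine isProperEdgeColoring_iff.2 ⟨fun x y h => ?_, fun x y y' h h' hyy' => ?_⟩
  · by_cases hxy : s(x, y) = s(u, v)
    · simpa [hxy] using hu.1
    · simpa [hxy] using hrange x y (hdel h hxy)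
  · by_cases hxy : s(x, y) = s(u, v)
    · have hxy' : s(x, y') ≠ s(u, v) := fun h => hyy' (Sym2.congr_right.1 (hxy.trans h.symm))
      simpa [hxy, hxy'] using (hfree hxy h' hyy').symm
    by_cases hxy' : s(x, y') = s(u, v)
    · simpa [hxy, hxy'] using hfree hxy' h hyy'.symm
    · simpa [hxy, hxy'] using hne x y y' (hdel h hxy) (hdel h' hxy') hyy'

lemma disjoint_missing_of_lt_chromIndex {u v : V} (hk : k < chromIndex G)
    (hψ : IsProperEdgeColoring (G.deleteEdges {s(u, v)}) k ψ) :
    Disjoint (missing (G.deleteEdges {s(u, v)}) k ψ u)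
      (missing (G.deleteEdges {s(u, v)}) k ψ v) := by
  classical
  refine Set.disjoint_left.2 fun c hu hv => hk.not_ge ?_
  exact Nat.sInf_le ⟨_, hψ.update_of_mem_missing hu hv⟩

end ProperColoring

lemma Equiv.swap_apply_mem {α : Type*} [DecidableEq α] {s : Set α} {a b x : α} (ha : a ∈ s)
    (hb : b ∈ s) (hx : x ∈ s) : Equiv.swap a b x ∈ s := by
  rw [Equiv.swap_apply_def]
  split_ifs <;> assumption

section Kempe

variable {V : Type*}

def kempeGraph (G : SimpleGraph V) (ψ : Sym2 V → ℕ) (c d : ℕ) : SimpleGraph V where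
  Adj x y := G.Adj x y ∧ (ψ s(x, y) = c ∨ ψ s(x, y) = d)
  symm := ⟨fun _ _ h => ⟨h.1.symm, Sym2.eq_swap ▸ h.2⟩⟩
  loopless := ⟨fun x h => G.loopless.irrefl x h.1⟩

open Classical in
/-- Non-edges of `G` with an end on the chain are recoloured too; their colours never matter. -/
noncomputable def kempeSwap (G : SimpleGraph V) (ψ : Sym2 V → ℕ) (c d : ℕ) (u : V) :
    Sym2 V → ℕ :=
  fun e => if ∃ x ∈ e, (kempeGraph G ψ c d).Reachable u x then Equiv.swap c d (ψ e) else ψ e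

variable {G : SimpleGraph V} {k : ℕ} {ψ : Sym2 V → ℕ} {c d : ℕ} {u v w : V}

lemma kempeSwap_apply_of_reachable (hv : (kempeGraph G ψ c d).Reachable u v) :
    kempeSwap G ψ c d u s(v, w) = Equiv.swap c d (ψ s(v, w)) :=
  if_pos ⟨v, Sym2.mem_mk_left v w, hv⟩

lemma kempeSwap_apply_of_not_reachable (hv : ¬ (kempeGraph G ψ c d).Reachable u v)
    (h : G.Adj v w) : kempeSwap G ψ c d u s(v, w) = ψ s(v, w) := by
  by_cases hcd : ψ s(v, w) = c ∨ ψ s(v, w) = d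
  · refine if_neg ?_
    rintro ⟨x, hx, hux⟩
    rcases Sym2.mem_iff.1 hx with rfl | rfl
    · exact hv hux
    · exact hv (hux.trans (SimpleGraph.Adj.reachable ⟨h.symm, Sym2.eq_swap ▸ hcd⟩))
  · obtain ⟨hc, hd⟩ := not_or.1 hcd
    unfold kempeSwap
    split_ifs
    · exact Equiv.swap_apply_of_ne_of_ne hc hd
    · rfl

lemma IsProperEdgeColoring.kempeSwap (hψ : IsProperEdgeColoring G k ψ)
    (hc : c ∈ Finset.Icc 1 k) (hd : d ∈ Finset.Icc 1 k) :
    IsProperEdgeColoring G k (kempeSwap G ψ c d u) := by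
  obtain ⟨hrange, hne⟩ := isProperEdgeColoring_iff.1 hψ
  refine isProperEdgeColoring_iff.2 ⟨fun v w h => ?_, fun v w w' h h' hww' => ?_⟩
  all_goals by_cases hv : (kempeGraph G ψ c d).Reachable u v
  · rw [kempeSwap_apply_of_reachable hv]
    exact Equiv.swap_apply_mem (s := (Finset.Icc 1 k : Set ℕ)) hc hd (hrange v w h)
  · rw [kempeSwap_apply_of_not_reachable hv h]
    exact hrange v w h
  · rw [kempeSwap_apply_of_reachable hv, kempeSwap_apply_of_reachable hv]
    exact (Equiv.swap c d).injective.ne (hne v w w' h h' hww')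
  · rw [kempeSwap_apply_of_not_reachable hv h, kempeSwap_apply_of_not_reachable hv h']
    exact hne v w w' h h' hww'

lemma missing_kempeSwap_of_not_reachable (hv : ¬ (kempeGraph G ψ c d).Reachable u v) :
    missing G k (kempeSwap G ψ c d u) v = missing G k ψ v := by
  ext x
  simp only [mem_missing_iff]
  refine and_congr_right fun _ => forall_congr' fun w => forall_congr' fun h => ?_
  rw [kempeSwap_apply_of_not_reachable hv h]

lemma mem_missing_kempeSwap_of_reachable (hv : (kempeGraph G ψ c d).Reachable u v)
    (hc : c ∈ Finset.Icc 1 k) (hd : d ∈ Finset.Icc 1 k) {x : ℕ} :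
    x ∈ missing G k (kempeSwap G ψ c d u) v ↔ Equiv.swap c d x ∈ missing G k ψ v := by
  have hIcc : x ∈ Finset.Icc 1 k ↔ Equiv.swap c d x ∈ Finset.Icc 1 k := by
    refine ⟨Equiv.swap_apply_mem (s := (Finset.Icc 1 k : Set ℕ)) hc hd, fun h => ?_⟩
    simpa using Equiv.swap_apply_mem (s := (Finset.Icc 1 k : Set ℕ)) hc hd h
  simp only [mem_missing_iff, kempeSwap_apply_of_reachable hv, ne_eq, Equiv.swap_apply_eq_iff,
    hIcc]

lemma encard_neighborSet_kempeGraph_le (hψ : IsProperEdgeColoring G k ψ) (v : V) :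
    ((kempeGraph G ψ c d).neighborSet v).encard ≤ ({c, d} \ missing G k ψ v).encard := by
  refine Set.encard_le_encard_of_injOn (f := fun w => ψ s(v, w)) (fun w hw => ⟨hw.2, ?_⟩) ?_
  · exact fun hmiss => hmiss.2 w hw.1 rfl
  · intro w hw w' hw' hww'
    by_contra hne
    exact hψ.ne_of_adj hw.1 hw'.1 hne hww'

lemma encard_neighborSet_kempeGraph_le_two (hψ : IsProperEdgeColoring G k ψ) (v : V) :
    ((kempeGraph G ψ c d).neighborSet v).encard ≤ 2 := calc
  _ ≤ ({c, d} \ missing G k ψ v).encard := encard_neighborSet_kempeGraph_le hψ v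
  _ ≤ ({c, d} : Set ℕ).encard := Set.encard_le_encard Set.sdiff_subset
  _ ≤ ({d} : Set ℕ).encard + 1 := Set.encard_insert_le _ _
  _ = 2 := by rw [Set.encard_singleton]; rfl

lemma encard_neighborSet_kempeGraph_le_one (hψ : IsProperEdgeColoring G k ψ) {m : ℕ}
    (hm : m ∈ missing G k ψ v) (hmcd : m = c ∨ m = d) :
    ((kempeGraph G ψ c d).neighborSet v).encard ≤ 1 := by
  refine (encard_neighborSet_kempeGraph_le hψ v).trans (Set.encard_le_one_iff.2 ?_)
  rintro a b ⟨ha, ha'⟩ ⟨hb, hb'⟩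
  have : a ≠ m := fun h => ha' (h ▸ hm)
  have : b ≠ m := fun h => hb' (h ▸ hm)
  simp only [Set.mem_insert_iff, Set.mem_singleton_iff] at ha hb
  omega

end Kempe

section Kierstead

variable {V : Type*}

/-- `disjoint_missing` says that no proper `k`-colouring of `G` extends to an added edge
`y0y1`. -/
structure KiersteadSetup (G : SimpleGraph V) (k : ℕ) (y0 y1 y2 y3 : V) : Prop where
  ne01 : y0 ≠ y1
  ne03 : y0 ≠ y3
  ne13 : y1 ≠ y3
  adj12 : G.Adj y1 y2
  adj23 : G.Adj y2 y3
  disjoint_missing : ∀ ψ, IsProperEdgeColoring G k ψ →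
    Disjoint (missing G k ψ y0) (missing G k ψ y1)
  missing_nonempty : ∀ ψ, IsProperEdgeColoring G k ψ → (missing G k ψ y1).Nonempty

/-- The Kierstead path conditions, with the colours of `y1y2` and `y2y3` already known not to
be missing at `y1` and `y2`. -/
structure IsKiersteadColoring (G : SimpleGraph V) (k : ℕ) (y0 y1 y2 y3 : V)
    (ψ : Sym2 V → ℕ) : Prop where
  proper : IsProperEdgeColoring G k ψ
  color12_mem : ψ s(y1, y2) ∈ missing G k ψ y0
  color23_mem : ψ s(y2, y3) ∈ missing G k ψ y0 ∪ missing G k ψ y1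

namespace KiersteadSetup

variable {G : SimpleGraph V} {k : ℕ} {y0 y1 y2 y3 : V} {ψ : Sym2 V → ℕ} {c d m : ℕ}

lemma color12_ne_color23 (S : KiersteadSetup G k y0 y1 y2 y3)
    (hψ : IsProperEdgeColoring G k ψ) : ψ s(y1, y2) ≠ ψ s(y2, y3) := by
  simpa only [Sym2.eq_swap] using hψ.ne_of_adj S.adj12.symm S.adj23 S.ne13

/-- Otherwise swapping the `(c, d)`-chain at `y0` would make `d` missing at both `y0` and `y1`. -/
lemma reachable_of_mem_missing (S : KiersteadSetup G k y0 y1 y2 y3)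
    (hψ : IsProperEdgeColoring G k ψ) (hc : c ∈ missing G k ψ y0)
    (hd : d ∈ missing G k ψ y1) : (kempeGraph G ψ c d).Reachable y0 y1 := by
  by_contra hno
  refine (S.disjoint_missing _ (hψ.kempeSwap (u := y0) hc.1 hd.1)).ne_of_mem
    (a := d) (b := d) ?_ ?_ rfl
  · rw [mem_missing_kempeSwap_of_reachable .rfl hc.1 hd.1, Equiv.swap_apply_right]
    exact hc
  · rwa [missing_kempeSwap_of_not_reachable hno]

/-- The `(c, d)`-chain through `y0` and `y1` is a path ending at both, so it misses every other
vertex at which `c` or `d` is missing. -/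
lemma not_reachable_y3 (S : KiersteadSetup G k y0 y1 y2 y3)
    (hψ : IsProperEdgeColoring G k ψ) (hc : c ∈ missing G k ψ y0)
    (hd : d ∈ missing G k ψ y1) (hm : m ∈ missing G k ψ y3) (hmcd : m = c ∨ m = d) :
    ¬ (kempeGraph G ψ c d).Reachable y0 y3 :=
  SimpleGraph.not_reachable_of_encard_neighborSet_le_one
    (encard_neighborSet_kempeGraph_le_two hψ) (encard_neighborSet_kempeGraph_le_one hψ hm hmcd)
    (encard_neighborSet_kempeGraph_le_one hψ hc (Or.inl rfl))
    (encard_neighborSet_kempeGraph_le_one hψ hd (Or.inr rfl)) S.ne03.symm S.ne13.symm S.ne01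
    (S.reachable_of_mem_missing hψ hc hd)

lemma exists_swap_at_y3 (S : KiersteadSetup G k y0 y1 y2 y3)
    (hψ : IsKiersteadColoring G k y0 y1 y2 y3 ψ)
    (hc : c ∈ missing G k ψ y0) (hd : d ∈ missing G k ψ y1) (hm : m ∈ missing G k ψ y3)
    (hmcd : m = c ∨ m = d) :
    ∃ ψ', IsKiersteadColoring G k y0 y1 y2 y3 ψ' ∧
      missing G k ψ' y0 = missing G k ψ y0 ∧ missing G k ψ' y1 = missing G k ψ y1 ∧
      missing G k ψ' y3 = Equiv.swap c d ⁻¹' missing G k ψ y3 ∧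
      ψ' s(y1, y2) = ψ s(y1, y2) ∧ ψ' s(y2, y3) = Equiv.swap c d (ψ s(y2, y3)) := by
  have hr := S.reachable_of_mem_missing hψ.proper hc hd
  have hnr0 : ¬ (kempeGraph G ψ c d).Reachable y3 y0 :=
    fun h => S.not_reachable_y3 hψ.proper hc hd hm hmcd h.symm
  have hnr1 : ¬ (kempeGraph G ψ c d).Reachable y3 y1 := fun h => hnr0 (h.trans hr.symm)
  have m0 := missing_kempeSwap_of_not_reachable (k := k) hnr0
  have m1 := missing_kempeSwap_of_not_reachable (k := k) hnr1
  have e2 := kempeSwap_apply_of_not_reachable hnr1 S.adj12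
  have e3 : kempeSwap G ψ c d y3 s(y2, y3) = Equiv.swap c d (ψ s(y2, y3)) := by
    rw [Sym2.eq_swap, kempeSwap_apply_of_reachable .rfl]
  refine ⟨kempeSwap G ψ c d y3, ⟨hψ.proper.kempeSwap hc.1 hd.1, ?_, ?_⟩,
    m0, m1, ?_, e2, e3⟩
  · rw [e2, m0]
    exact hψ.color12_mem
  · rw [e3, m0, m1]
    exact Equiv.swap_apply_mem (Or.inl hc) (Or.inr hd) hψ.color23_mem
  · ext x
    exact mem_missing_kempeSwap_of_reachable .rfl hc.1 hd.1

lemma color23_notMem_missing_y1 (S : KiersteadSetup G k y0 y1 y2 y3)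
    (hψ : IsKiersteadColoring G k y0 y1 y2 y3 ψ) (h2 : ψ s(y1, y2) ∈ missing G k ψ y3) :
    ψ s(y2, y3) ∉ missing G k ψ y1 := by
  intro h3
  have hK12 : (kempeGraph G ψ (ψ s(y1, y2)) (ψ s(y2, y3))).Adj y1 y2 := ⟨S.adj12, Or.inl rfl⟩
  have hK23 : (kempeGraph G ψ (ψ s(y1, y2)) (ψ s(y2, y3))).Adj y2 y3 := ⟨S.adj23, Or.inr rfl⟩
  refine S.not_reachable_y3 hψ.proper hψ.color12_mem h3 h2 (Or.inl rfl) ?_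
  exact ((S.reachable_of_mem_missing hψ.proper hψ.color12_mem h3).trans hK12.reachable).trans
    hK23.reachable

lemma disjoint_missing_y1_y3 (S : KiersteadSetup G k y0 y1 y2 y3)
    (hψ : IsKiersteadColoring G k y0 y1 y2 y3 ψ) (h2 : ψ s(y1, y2) ∈ missing G k ψ y3) :
    Disjoint (missing G k ψ y1) (missing G k ψ y3) := by
  refine Set.disjoint_left.2 fun b hb1 hb3 => ?_
  rcases hψ.color23_mem with ht0 | ht1
  · obtain ⟨ψ', hψ', m0, m1, m3, e2, e3⟩ := S.exists_swap_at_y3 hψ ht0 hb1 hb3 (Or.inr rfl)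
    refine S.color23_notMem_missing_y1 hψ' ?_ ?_
    · rw [e2, m3, Set.mem_preimage, Equiv.swap_apply_of_ne_of_ne
        (S.color12_ne_color23 hψ.proper) ((S.disjoint_missing ψ hψ.proper).ne_of_mem
          hψ.color12_mem hb1)]
      exact h2
    · rw [e3, m1, Equiv.swap_apply_left]
      exact hb1
  · exact S.color23_notMem_missing_y1 hψ h2 ht1

lemma eq_color12_of_mem (S : KiersteadSetup G k y0 y1 y2 y3)
    (hψ : IsKiersteadColoring G k y0 y1 y2 y3 ψ) (h2 : ψ s(y1, y2) ∈ missing G k ψ y3)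
    {β : ℕ} (hβ : β ∈ missing G k ψ y3 ∩ (missing G k ψ y0 ∪ missing G k ψ y1)) :
    β = ψ s(y1, y2) := by
  by_contra hβ2
  obtain ⟨hβ3, hβ0 | hβ1⟩ := hβ
  · obtain ⟨δ, hδ⟩ := S.missing_nonempty ψ hψ.proper
    obtain ⟨ψ', hψ', -, m1, m3, e2, -⟩ := S.exists_swap_at_y3 hψ hβ0 hδ hβ3 (Or.inl rfl)
    refine (S.disjoint_missing_y1_y3 hψ' ?_).ne_of_mem (a := δ) (b := δ) ?_ ?_ rfl
    · rw [e2, m3, Set.mem_preimage, Equiv.swap_apply_of_ne_of_ne (Ne.symm hβ2)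
        ((S.disjoint_missing ψ hψ.proper).ne_of_mem hψ.color12_mem hδ)]
      exact h2
    · rwa [m1]
    · rwa [m3, Set.mem_preimage, Equiv.swap_apply_right]
  · exact (S.disjoint_missing_y1_y3 hψ h2).ne_of_mem hβ1 hβ3 rfl

lemma eq_of_mem_missing_y1_of_mem (S : KiersteadSetup G k y0 y1 y2 y3)
    (hψ : IsKiersteadColoring G k y0 y1 y2 y3 ψ) {α β : ℕ}
    (hα : α ∈ missing G k ψ y1 ∩ missing G k ψ y3)
    (hβ : β ∈ missing G k ψ y3 ∩ (missing G k ψ y0 ∪ missing G k ψ y1)) : α = β := by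
  by_contra hαβ
  by_cases h2β : ψ s(y1, y2) = β
  · exact (S.disjoint_missing_y1_y3 hψ (h2β ▸ hβ.1)).ne_of_mem hα.1 hα.2 rfl
  obtain ⟨ψ', hψ', m0, m1, m3, e2, -⟩ :=
    S.exists_swap_at_y3 hψ hψ.color12_mem hα.1 hα.2 (Or.inr rfl)
  have hβ' : β ∈ missing G k ψ' y3 ∩ (missing G k ψ' y0 ∪ missing G k ψ' y1) := by
    rw [m0, m1, m3, Set.mem_inter_iff, Set.mem_preimage,
      Equiv.swap_apply_of_ne_of_ne (Ne.symm h2β) (Ne.symm hαβ)]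
    exact hβ
  refine h2β (e2 ▸ S.eq_color12_of_mem hψ' ?_ hβ').symm
  rw [e2, m3, Set.mem_preimage, Equiv.swap_apply_left]
  exact hα.2

lemma subsingleton_missing_inter (S : KiersteadSetup G k y0 y1 y2 y3)
    (hψ : IsKiersteadColoring G k y0 y1 y2 y3 ψ) :
    (missing G k ψ y3 ∩ (missing G k ψ y0 ∪ missing G k ψ y1)).Subsingleton := by
  rintro α ⟨hα3, hα0 | hα1⟩ β ⟨hβ3, hβ0 | hβ1⟩
  · by_contra hαβ
    obtain ⟨δ, hδ⟩ := S.missing_nonempty ψ hψ.proper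
    obtain ⟨ψ', hψ', m0, m1, m3, -, -⟩ := S.exists_swap_at_y3 hψ hα0 hδ hα3 (Or.inl rfl)
    have hβδ : β ≠ δ := (S.disjoint_missing ψ hψ.proper).ne_of_mem hβ0 hδ
    refine hβδ (S.eq_of_mem_missing_y1_of_mem hψ' ?_ ?_).symm
    · rw [m1, m3, Set.mem_inter_iff, Set.mem_preimage, Equiv.swap_apply_right]
      exact ⟨hδ, hα3⟩
    · rw [m0, m3, Set.mem_inter_iff, Set.mem_preimage,
        Equiv.swap_apply_of_ne_of_ne (Ne.symm hαβ) hβδ]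
      exact ⟨hβ3, Or.inl hβ0⟩
  · exact (S.eq_of_mem_missing_y1_of_mem hψ ⟨hβ1, hβ3⟩ ⟨hα3, Or.inl hα0⟩).symm
  · exact S.eq_of_mem_missing_y1_of_mem hψ ⟨hα1, hα3⟩ ⟨hβ3, Or.inl hβ0⟩
  · exact S.eq_of_mem_missing_y1_of_mem hψ ⟨hα1, hα3⟩ ⟨hβ3, Or.inr hβ1⟩

lemma deleteEdges [Fintype V] [DecidableEq V] [DecidableRel G.Adj]
    (hΔ : G.maxDegree < chromIndex G) (h01 : G.Adj y0 y1) (h12 : G.Adj y1 y2)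
    (h23 : G.Adj y2 y3) (h02 : y0 ≠ y2) (h03 : y0 ≠ y3) (h13 : y1 ≠ y3) :
    KiersteadSetup (G.deleteEdges {s(y0, y1)}) G.maxDegree y0 y1 y2 y3 where
  ne01 := h01.ne
  ne03 := h03
  ne13 := h13
  adj12 := SimpleGraph.deleteEdges_adj.2 ⟨h12, by simp [h01.ne', h02.symm]⟩
  adj23 := SimpleGraph.deleteEdges_adj.2 ⟨h23, by simp [h02.symm, h03.symm, h13.symm]⟩
  disjoint_missing _ hψ := disjoint_missing_of_lt_chromIndex hΔ hψ
  missing_nonempty _ _ := by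
    refine missing_nonempty_of_card_lt ((G.neighborFinset y1).erase y0) (fun w hw => ?_) ?_
    · obtain ⟨hw, hne⟩ := SimpleGraph.deleteEdges_adj.1 hw
      refine Finset.mem_erase.2 ⟨?_, (G.mem_neighborFinset _ _).2 hw⟩
      rintro rfl
      exact hne (by simp [Sym2.eq_swap])
    · have := G.degree_le_maxDegree y1
      rw [Finset.card_erase_of_mem ((G.mem_neighborFinset _ _).2 h01.symm),
        G.card_neighborFinset_eq_degree]
      have : 0 < G.degree y1 := G.degree_pos_iff_exists_adj y1 |>.2 ⟨y0, h01.symm⟩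
      omega

end KiersteadSetup

end Kierstead

theorem kierstead_path_missing_bound_general {V : Type*} [Fintype V] [DecidableEq V]
    (G : SimpleGraph V) [DecidableRel G.Adj]
    (hClass2 : chromIndex G = G.maxDegree + 1)
    (y0 y1 y2 y3 : V)
    (hdist : ([y0, y1, y2, y3] : List V).Pairwise (· ≠ ·))
    (h01 : G.Adj y0 y1) (h12 : G.Adj y1 y2) (h23 : G.Adj y2 y3)
    (φ : Sym2 V → ℕ)
    (hφ : IsProperEdgeColoring (G.deleteEdges {s(y0, y1)}) G.maxDegree φ)
    -- the Kierstead path condition K2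
    (hK2 : φ s(y1, y2) ∈ missing (G.deleteEdges {s(y0, y1)}) G.maxDegree φ y0 ∪
      missing (G.deleteEdges {s(y0, y1)}) G.maxDegree φ y1)
    (hK3 : φ s(y2, y3) ∈ missing (G.deleteEdges {s(y0, y1)}) G.maxDegree φ y0 ∪
      missing (G.deleteEdges {s(y0, y1)}) G.maxDegree φ y1 ∪
      missing (G.deleteEdges {s(y0, y1)}) G.maxDegree φ y2) :
    (missing (G.deleteEdges {s(y0, y1)}) G.maxDegree φ y3 ∩
      (missing (G.deleteEdges {s(y0, y1)}) G.maxDegree φ y0 ∪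
        missing (G.deleteEdges {s(y0, y1)}) G.maxDegree φ y1)).ncard ≤ 1 := by
  obtain ⟨⟨-, h02, h03⟩, ⟨-, h13⟩, -⟩ : (y0 ≠ y1 ∧ y0 ≠ y2 ∧ y0 ≠ y3) ∧ (y1 ≠ y2 ∧ y1 ≠ y3) ∧
      y2 ≠ y3 := by simpa using hdist
  have S := KiersteadSetup.deleteEdges (by omega) h01 h12 h23 h02 h03 h13
  have hφK : IsKiersteadColoring (G.deleteEdges {s(y0, y1)}) G.maxDegree y0 y1 y2 y3 φ :=
    ⟨hφ, hK2.resolve_right fun h => h.2 y2 S.adj12 rfl,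
      hK3.resolve_right fun h => h.2 y3 S.adj23 rfl⟩
  have hsub := S.subsingleton_missing_inter hφK
  exact (Set.ncard_le_one hsub.finite).2 hsub

/-- If `G` is Class 2 with critical edge `e₁ = y₀y₁`, `φ ∈ C^Δ(G - e₁)`,
and `K = (y₀, e₁, y₁, e₂, y₂, e₃, y₃)` is a Kierstead path with respect to `e₁` and `φ`,
then `|φ̄(y₃) ∩ (φ̄(y₀) ∪ φ̄(y₁))| ≤ 1`. -/
theorem kierstead_path_missing_bound {V : Type*} [Fintype V] [DecidableEq V]
    (G : SimpleGraph V) [DecidableRel G.Adj]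
    (hClass2 : chromIndex G = G.maxDegree + 1)
    (y0 y1 y2 y3 : V)
    (hdist : ([y0, y1, y2, y3] : List V).Pairwise (· ≠ ·))
    (h01 : G.Adj y0 y1) (h12 : G.Adj y1 y2) (h23 : G.Adj y2 y3)
    (hcritical : chromIndex (G.deleteEdges {s(y0, y1)}) < chromIndex G)
    (φ : Sym2 V → ℕ)
    (hφ : IsProperEdgeColoring (G.deleteEdges {s(y0, y1)}) G.maxDegree φ)
    -- the Kierstead path condition K2
    (hK2 : φ s(y1, y2) ∈ missing (G.deleteEdges {s(y0, y1)}) G.maxDegree φ y0 ∪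
      missing (G.deleteEdges {s(y0, y1)}) G.maxDegree φ y1)
    (hK3 : φ s(y2, y3) ∈ missing (G.deleteEdges {s(y0, y1)}) G.maxDegree φ y0 ∪
      missing (G.deleteEdges {s(y0, y1)}) G.maxDegree φ y1 ∪
      missing (G.deleteEdges {s(y0, y1)}) G.maxDegree φ y2) :
    (missing (G.deleteEdges {s(y0, y1)}) G.maxDegree φ y3 ∩
      (missing (G.deleteEdges {s(y0, y1)}) G.maxDegree φ y0 ∪
        missing (G.deleteEdges {s(y0, y1)}) G.maxDegree φ y1)).ncard ≤ 1 :=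
  kierstead_path_missing_bound_general G hClass2 y0 y1 y2 y3 hdist h01 h12 h23 φ hφ hK2 hK3
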